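/- Let d ≥ 1 and let S be a finite set of n points in ℝ^d. Then there exists a point c ∈ ℝ^d (a Tukey centerpoint) whose Tukey depth with respect to S is at least n/(d+1): for every nonzero vector v ∈ ℝ^d, the number of points x ∈ S with ⟨v, x − c⟩ ≥ 0 is at least n/(d+1). In particular, the supremum over y ∈ ℝ^d of the Tukey depth of y with respect to S is at least n/(d+1), so every Tukey median (a point maximizing Tukey depth) is a centerpoint. -/

import Mathlib

open scoped RealInnerProductSpace Classical

/-- The Tukey depth of a point `y` with respect to a finite set `S ⊆ ℝ^d`: the minimum,
over nonzero vectors `v`, of the number of points `x ∈ S` with `⟪v, x − y⟫ ≥ 0`. -/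
noncomputable def tukeyDepth {d : ℕ} (S : Finset (EuclideanSpace ℝ (Fin d)))
    (y : EuclideanSpace ℝ (Fin d)) : ℕ :=
  sInf {k : ℕ | ∃ v : EuclideanSpace ℝ (Fin d), v ≠ 0 ∧
    k = (S.filter fun x => 0 ≤ ⟪v, x - y⟫).card}

/-!
Call a subset `T ⊆ S` large if fewer than `#S / (d + 1)` points of `S` lie outside it. By the
union bound any `d + 1` large sets share a point of `S`, so by Helly's theorem the convex hulls
of all large sets share a point `c`. If a closed halfspace with `c` on its boundary contained
fewer than `#S / (d + 1)` points, the points of `S` in the complementary open halfspace would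
form a large set whose convex hull misses `c`.
-/

open Finset Module

theorem Finset.exists_mem_forall_mem_of_mul_card_sdiff_lt {α : Type*} {S : Finset α}
    {I : Finset (Finset α)} {k : ℕ} (hI : I.Nonempty) (hIk : #I ≤ k)
    (hlarge : ∀ T ∈ I, k * #(S \ T) < #S) : ∃ x ∈ S, ∀ T ∈ I, x ∈ T := by
  have hsum : ∑ T ∈ I, #(S \ T) < #S := by
    refine Nat.lt_of_mul_lt_mul_left (a := k) ?_
    calc k * ∑ T ∈ I, #(S \ T) = ∑ T ∈ I, k * #(S \ T) := mul_sum _ _ _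
      _ < ∑ _T ∈ I, #S := sum_lt_sum_of_nonempty hI hlarge
      _ = #I * #S := by rw [sum_const, smul_eq_mul]
      _ ≤ k * #S := Nat.mul_le_mul_right _ hIk
  have hunion : #(I.biUnion (S \ ·)) < #S := card_biUnion_le.trans_lt hsum
  obtain ⟨x, hxS, hx⟩ := not_subset.mp fun h => (card_le_card h).not_gt hunion
  exact ⟨x, hxS, fun T hT => by_contra fun hxT => hx (mem_biUnion.mpr ⟨T, hT, mem_sdiff.mpr ⟨hxS, hxT⟩⟩)⟩

section Centerpoint

variable {E : Type*} [AddCommGroup E] [Module ℝ E] [FiniteDimensional ℝ E]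

theorem exists_forall_mem_convexHull_of_mul_card_sdiff_lt (S : Finset E) :
    ∃ c, ∀ T ⊆ S, (finrank ℝ E + 1) * #(S \ T) < #S → c ∈ convexHull ℝ (T : Set E) := by
  let large := S.powerset.filter fun T => (finrank ℝ E + 1) * #(S \ T) < #S
  obtain ⟨c, hc⟩ : (⋂ T ∈ large, convexHull ℝ (T : Set E)).Nonempty := by
    refine Convex.helly_theorem' (fun T _ => convex_convexHull ℝ _) fun I hI hIcard => ?_
    obtain rfl | hIne := I.eq_empty_or_nonempty
    · simp
    obtain ⟨x, -, hx⟩ := exists_mem_forall_mem_of_mul_card_sdiff_lt hIne hIcard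
      fun T hT => (mem_filter.mp (hI hT)).2
    exact ⟨x, Set.mem_biInter fun T hT => subset_convexHull ℝ _ (mem_coe.mpr (hx T hT))⟩
  exact ⟨c, fun T hTS hT => Set.mem_iInter₂.mp hc T (mem_filter.mpr ⟨mem_powerset.mpr hTS, hT⟩)⟩

theorem exists_centerpoint (S : Finset E) :
    ∃ c, ∀ f : E →ₗ[ℝ] ℝ, #S ≤ (finrank ℝ E + 1) * #{x ∈ S | f c ≤ f x} := by
  obtain ⟨c, hc⟩ := exists_forall_mem_convexHull_of_mul_card_sdiff_lt S
  refine ⟨c, fun f => not_lt.mp fun hf => ?_⟩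
  have hsdiff : S \ {x ∈ S | ¬f c ≤ f x} = {x ∈ S | f c ≤ f x} := by
    rw [filter_not, Finset.sdiff_sdiff_eq_self (filter_subset _ _)]
  have hmem := hc _ (filter_subset _ _) (hsdiff ▸ hf)
  obtain ⟨y, hy, hcy⟩ := (f.convexOn convex_univ).exists_ge_of_mem_convexHull
    (Set.subset_univ _) hmem
  exact (mem_filter.mp (mem_coe.mp hy)).2 hcy

end Centerpoint

theorem tukeyDepth_le_card {d : ℕ} (S : Finset (EuclideanSpace ℝ (Fin d)))
    (y : EuclideanSpace ℝ (Fin d)) : tukeyDepth S y ≤ #S := by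
  rw [tukeyDepth]
  rcases Set.eq_empty_or_nonempty {k : ℕ | ∃ v : EuclideanSpace ℝ (Fin d), v ≠ 0 ∧
      k = #{x ∈ S | 0 ≤ ⟪v, x - y⟫}} with h | h
  · simp [h]
  · obtain ⟨v, -, hk⟩ := Nat.sInf_mem h
    exact hk ▸ card_filter_le _ _

theorem exists_ne_zero_tukeyDepth_eq {d : ℕ} (hd : 0 < d) (S : Finset (EuclideanSpace ℝ (Fin d)))
    (y : EuclideanSpace ℝ (Fin d)) : ∃ v ≠ 0, tukeyDepth S y = #{x ∈ S | 0 ≤ ⟪v, x - y⟫} := by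
  have : Nontrivial (EuclideanSpace ℝ (Fin d)) :=
    Module.nontrivial_of_finrank_pos (R := ℝ) (by rwa [finrank_euclideanSpace_fin])
  obtain ⟨v, hv⟩ := exists_ne (0 : EuclideanSpace ℝ (Fin d))
  exact Nat.sInf_mem (s := {k | ∃ v : EuclideanSpace ℝ (Fin d), v ≠ 0 ∧
    k = #{x ∈ S | 0 ≤ ⟪v, x - y⟫}}) ⟨_, v, hv, rfl⟩

/-- Centerpoint theorem: every finite set of `n` points in `ℝ^d` admits a Tukey
centerpoint `c`, of depth at least `n/(d+1)`.  In particular the supremum of the Tukey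
depth is at least `n/(d+1)`, so every Tukey median is a centerpoint. -/
theorem exists_tukey_centerpoint
    (d n : ℕ) (hd : 1 ≤ d) (S : Finset (EuclideanSpace ℝ (Fin d))) (hS : S.card = n) :
    (∃ c : EuclideanSpace ℝ (Fin d), ∀ v : EuclideanSpace ℝ (Fin d), v ≠ 0 →
        (n : ℝ) / (d + 1) ≤ ((S.filter fun x => 0 ≤ ⟪v, x - c⟫).card : ℝ))
    ∧ ((n : ℝ) / (d + 1) ≤ ⨆ y : EuclideanSpace ℝ (Fin d), (tukeyDepth S y : ℝ))
    ∧ (∀ m : EuclideanSpace ℝ (Fin d),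
        (∀ y : EuclideanSpace ℝ (Fin d), tukeyDepth S y ≤ tukeyDepth S m) →
        (n : ℝ) / (d + 1) ≤ (tukeyDepth S m : ℝ)) := by
  obtain ⟨c, hc⟩ := exists_centerpoint S
  have hcount (v : EuclideanSpace ℝ (Fin d)) :
      (n : ℝ) / (d + 1) ≤ #{x ∈ S | 0 ≤ ⟪v, x - c⟫} := by
    have := hc (innerₛₗ ℝ v)
    simp only [innerₛₗ_apply_apply, finrank_euclideanSpace_fin, hS] at this
    simp only [inner_sub_right, sub_nonneg]
    rw [div_le_iff₀ (by positivity), mul_comm]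
    exact_mod_cast this
  have hdepth : (n : ℝ) / (d + 1) ≤ tukeyDepth S c := by
    obtain ⟨v, -, hv⟩ := exists_ne_zero_tukeyDepth_eq hd S c
    exact hv ▸ hcount v
  have hbdd : BddAbove (Set.range fun y => (tukeyDepth S y : ℝ)) :=
    ⟨n, fun _ ⟨y, hy⟩ => hy ▸ Nat.cast_le.mpr (hS ▸ tukeyDepth_le_card S y)⟩
  exact ⟨⟨c, fun v _ => hcount v⟩, hdepth.trans (le_ciSup hbdd c),
    fun m hm => hdepth.trans (by exact_mod_cast hm c)⟩
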